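/- arXiv:1703.03001 — 2 statements merged into one kernel-verified Lean document; each statement's English description precedes it below -/
import Mathlib

section
/- Let ns, nf ≥ 1, let M₂, K₂ ∈ ℝ^{nf×nf} be invertible matrices, let H : ℝ^{ns} → ℝ^{nf} be continuously differentiable, let E : ℝ^{ns} → ℝ^{nf×ns} be any map, let ζ, β ∈ ℝ and p : ℝ → ℝ^{nf}. Define P₂(x, ẋ, η, v, τ; ε) = −M₂⁻¹( ζK₂v + εζE(x)ẋ + K₂η + H(x) − εβp(τ) ), G₀(x) = −K₂⁻¹H(x) and H₀(x, ẋ) = −K₂⁻¹[DH(x)]ẋ. Fix (x, ẋ, τ) and denote by ∂ηP̄₂, ∂vP̄₂, ∂εP̄₂ the partial derivatives of P₂ with respect to η, v and ε evaluated at (x, ẋ, G₀(x), 0, τ; 0). Then the unique solution G₁ ∈ ℝ^{nf} of the linear equation ∂ηP̄₂ · G₁ + ∂vP̄₂ · H₀(x,ẋ) + ∂εP̄₂ = 0 is G₁ = −ζ( H₀(x,ẋ) + K₂⁻¹E(x)ẋ ) + βK₂⁻¹p(τ). -/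
/-- First-order slow-manifold correction for the SFD of the discretized von Kármán
beam: with `P₂ = −M₂⁻¹(ζK₂v + εζE(x)ẋ + K₂η + H(x) − εβp(τ))`, `G₀(x) = −K₂⁻¹H(x)`
and `H₀(x,ẋ) = −K₂⁻¹[DH(x)]ẋ`, the unique solution `G₁` of
`∂ηP̄₂·G₁ + ∂vP̄₂·H₀ + ∂εP̄₂ = 0` (partial derivatives evaluated on the critical
manifold) is `G₁ = −ζ(H₀ + K₂⁻¹E(x)ẋ) + βK₂⁻¹p(τ)`. -/
theorem slow_manifold_first_order_correction
    (ns nf : ℕ) (hns : 1 ≤ ns) (hnf : 1 ≤ nf)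
    (M₂ K₂ : Matrix (Fin nf) (Fin nf) ℝ)
    (hM₂ : IsUnit M₂.det) (hK₂ : IsUnit K₂.det)
    (H : (Fin ns → ℝ) → (Fin nf → ℝ)) (hH : ContDiff ℝ 1 H)
    (E : (Fin ns → ℝ) → Matrix (Fin nf) (Fin ns) ℝ)
    (ζ β : ℝ) (p : ℝ → (Fin nf → ℝ))
    (P₂ : (Fin ns → ℝ) → (Fin ns → ℝ) → (Fin nf → ℝ) → (Fin nf → ℝ) → ℝ → ℝ →
      (Fin nf → ℝ))
    (hP₂ : ∀ x xd η v τ ε, P₂ x xd η v τ ε =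
      -(M₂⁻¹.mulVec (ζ • K₂.mulVec v + (ε * ζ) • (E x).mulVec xd
        + K₂.mulVec η + H x - (ε * β) • p τ)))
    (G₀ : (Fin ns → ℝ) → (Fin nf → ℝ))
    (hG₀ : ∀ x, G₀ x = -(K₂⁻¹.mulVec (H x)))
    (H₀ : (Fin ns → ℝ) → (Fin ns → ℝ) → (Fin nf → ℝ))
    (hH₀ : ∀ x xd, H₀ x xd = -(K₂⁻¹.mulVec (fderiv ℝ H x xd)))
    (x xd : Fin ns → ℝ) (τ : ℝ)
    (A B : (Fin nf → ℝ) →L[ℝ] (Fin nf → ℝ))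
    (hA : HasFDerivAt (fun η => P₂ x xd η 0 τ 0) A (G₀ x))
    (hB : HasFDerivAt (fun v => P₂ x xd (G₀ x) v τ 0) B 0)
    (C : Fin nf → ℝ)
    (hC : HasDerivAt (fun ε => P₂ x xd (G₀ x) 0 τ ε) C 0) :
    ∀ G₁ : Fin nf → ℝ,
      A G₁ + B (H₀ x xd) + C = 0 ↔
      G₁ = (-ζ) • (H₀ x xd + K₂⁻¹.mulVec ((E x).mulVec xd))
            + β • K₂⁻¹.mulVec (p τ) := by
  intro G₁
  haveI := M₂.invertibleOfIsUnitDet hM₂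
  haveI := K₂.invertibleOfIsUnitDet hK₂
  set N : Matrix (Fin nf) (Fin nf) ℝ := M₂⁻¹ * K₂ with hNdef
  -- K₂ applied to G₀ cancels H x
  have hK₂G₀ : K₂.mulVec (G₀ x) = -(H x) := by
    rw [hG₀ x]
    rw [Matrix.mulVec_neg, Matrix.mulVec_mulVec, Matrix.mul_nonsing_inv _ hK₂,
      Matrix.one_mulVec]
  -- the linear maps
  set LA : (Fin nf → ℝ) →L[ℝ] (Fin nf → ℝ) :=
    LinearMap.toContinuousLinearMap (Matrix.mulVecLin (-N)) with hLA
  set LB : (Fin nf → ℝ) →L[ℝ] (Fin nf → ℝ) :=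
    LinearMap.toContinuousLinearMap (Matrix.mulVecLin ((-ζ) • N)) with hLB
  have hAeq : A = LA := by
    apply hA.unique
    have h1 : HasFDerivAt (fun η => LA η + -(M₂⁻¹.mulVec (H x))) LA (G₀ x) :=
      LA.hasFDerivAt.add_const _
    convert h1 using 2 with η
    rw [hP₂]
    simp [hLA, hNdef, Matrix.mulVec_add, Matrix.mulVec_sub, Matrix.mulVec_zero,
      Matrix.neg_mulVec, Matrix.mulVec_mulVec, neg_add, smul_zero]
    abel
  have hBeq : B = LB := by
    apply hB.unique
    have h1 : HasFDerivAt (fun v => LB v + (0 : Fin nf → ℝ)) LB 0 :=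
      LB.hasFDerivAt.add_const _
    convert h1 using 2 with v
    rw [hP₂]
    simp [hLB, hNdef, Matrix.mulVec_add, Matrix.mulVec_sub, Matrix.mulVec_zero,
      Matrix.neg_mulVec, Matrix.mulVec_mulVec, Matrix.mulVec_smul, hK₂G₀,
      Matrix.smul_mulVec, smul_zero]
  have hCeq : C = -(M₂⁻¹.mulVec (ζ • (E x).mulVec xd - β • p τ)) := by
    apply hC.unique
    have h1 : HasDerivAt (fun ε : ℝ => ε • -(M₂⁻¹.mulVec (ζ • (E x).mulVec xd - β • p τ)))
        (-(M₂⁻¹.mulVec (ζ • (E x).mulVec xd - β • p τ))) 0 := by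
      simpa using (hasDerivAt_id (0:ℝ)).smul_const (-(M₂⁻¹.mulVec (ζ • (E x).mulVec xd - β • p τ)))
    convert h1 using 2 with ε
    case e'_4 => rfl
    case e'_5 => rfl
    case e'_6 => rfl
    rename_i ε
    rw [hP₂, hK₂G₀]
    have hinner : ζ • K₂.mulVec 0 + (ε * ζ) • (E x).mulVec xd + -(H x) + H x - (ε * β) • p τ
        = ε • (ζ • (E x).mulVec xd - β • p τ) := by
      simp only [Matrix.mulVec_zero, smul_zero]
      module
    rw [hinner, Matrix.mulVec_smul, smul_neg]
  rw [hAeq, hBeq, hCeq]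
  haveI : Invertible N := N.invertibleOfIsUnitDet (by
    rw [hNdef, Matrix.det_mul]
    exact (M₂.isUnit_nonsing_inv_det hM₂).mul hK₂)
  set R := (-ζ) • (H₀ x xd + K₂⁻¹.mulVec ((E x).mulVec xd)) + β • K₂⁻¹.mulVec (p τ) with hR
  have hNK : N * K₂⁻¹ = M₂⁻¹ := by
    rw [hNdef, Matrix.mul_assoc, Matrix.mul_nonsing_inv _ hK₂, Matrix.mul_one]
  have hA' : LA G₁ = -(N.mulVec G₁) := by
    simp [hLA, Matrix.neg_mulVec]
  have hB' : LB (H₀ x xd) = (-ζ) • N.mulVec (H₀ x xd) := by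
    simp [hLB, Matrix.smul_mulVec, neg_smul, Matrix.neg_mulVec]
  have hR' : N.mulVec R = (-ζ) • N.mulVec (H₀ x xd)
      + -(M₂⁻¹.mulVec (ζ • (E x).mulVec xd - β • p τ)) := by
    rw [hR]
    simp only [Matrix.mulVec_add, Matrix.mulVec_smul, Matrix.mulVec_mulVec, ← Matrix.mul_assoc, hNK,
      Matrix.mulVec_sub]
    module
  have key : LA G₁ + LB (H₀ x xd) + -(M₂⁻¹.mulVec (ζ • (E x).mulVec xd - β • p τ)) = 0
      ↔ N.mulVec G₁ = N.mulVec R := by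
    rw [hA', hB', hR', add_assoc, neg_add_eq_zero]
  rw [key]
  exact ⟨fun h => Matrix.mulVec_injective_of_invertible N h, fun h => by rw [h]⟩
end

section
/- Let N ≥ 2, let λ₁, …, λ_N ∈ ℂ, set Λ = diag(λ₁, …, λ_N), and fix ℓ ∈ {1, …, N−1}. Let T : ℂ^N → ℂ^N be homogeneous cubic with coefficients T_{ijkl} ∈ ℂ, i.e. T_i(z) = Σ_{j,k,l=1}^{N} T_{ijkl} z_j z_k z_l. Assume the non-resonance conditions: 3λ_ℓ ≠ λ_i and 3λ_{ℓ+1} ≠ λ_i for all i; 2λ_ℓ + λ_{ℓ+1} ≠ λ_i for all i ≠ ℓ; and λ_ℓ + 2λ_{ℓ+1} ≠ λ_i for all i ≠ ℓ+1. With the index map m(1) = ℓ, m(2) = ℓ+1, define W : ℂ² → ℂ^N by W_i(s₁, s₂) = δ_{iℓ}s₁ + δ_{i(ℓ+1)}s₂ + Σ_{j,k,l∈{1,2}} W⁽³⁾_{ijkl} s_j s_k s_l, where W⁽³⁾_{i111} = T_{iℓℓℓ}/(3λ_ℓ − λ_i), W⁽³⁾_{i222} = T_{i(ℓ+1)(ℓ+1)(ℓ+1)}/(3λ_{ℓ+1}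 − λ_i), W⁽³⁾_{ijkl} = (1 − δ_{iℓ}) T_{i m(j)m(k)m(l)}/(2λ_ℓ + λ_{ℓ+1} − λ_i) whenever exactly two of (j,k,l) equal 1, and W⁽³⁾_{ijkl} = (1 − δ_{i(ℓ+1)}) T_{i m(j)m(k)m(l)}/(λ_ℓ + 2λ_{ℓ+1} − λ_i) whenever exactly two of (j,k,l) equal 2. Define β = T_{ℓℓℓ(ℓ+1)} + T_{ℓℓ(ℓ+1)ℓ} + T_{ℓ(ℓ+1)ℓℓ}, γ = T_{(ℓ+1)(ℓ+1)(ℓ+1)ℓ} + T_{(ℓ+1)(ℓ+1)ℓ(ℓ+1)} + T_{(ℓ+1)ℓ(ℓ+1)(ℓ+1)}, and R(s₁, s₂) = (λ_ℓ s₁ + β s₁²s₂, λ_{ℓ+1} s₂ + γ s₁ s₂²). Then the invariance defect DW(s)·R(s) − Λ W(s) − T(W(s)), as a polynomial map ℂ² → ℂ^N, has all monomial coefficients of total degree ≤ 4 equal to zero; i.e. the SSM parametrization W satisfies the invariance equation up to terms of order O(|s|⁵). -/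
noncomputable def ssmD (a b : ℂ) (w : Fin 2 → Fin 2 → Fin 2 → ℂ) (x : Fin 2 → ℂ) :
    (Fin 2 → ℂ) →L[ℂ] ℂ :=
  (a • ContinuousLinearMap.proj (0 : Fin 2) + b • ContinuousLinearMap.proj (1 : Fin 2)) +
  ∑ j : Fin 2, ∑ k : Fin 2, ∑ m : Fin 2,
    ((w j k m * x j * x k) • ContinuousLinearMap.proj m +
      x m • ((w j k m * x j) • ContinuousLinearMap.proj k +
        x k • (w j k m • ContinuousLinearMap.proj j)))

lemma ssmD_hasFDerivAt (a b : ℂ) (w : Fin 2 → Fin 2 → Fin 2 → ℂ) (x : Fin 2 → ℂ) :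
    HasFDerivAt
      (fun y : Fin 2 → ℂ => a * y 0 + b * y 1 + ∑ j : Fin 2, ∑ k : Fin 2, ∑ m : Fin 2,
        w j k m * y j * y k * y m)
      (ssmD a b w x) x := by
  have hp : ∀ j : Fin 2, HasFDerivAt (𝕜 := ℂ) (fun y : Fin 2 → ℂ => y j)
      (ContinuousLinearMap.proj (R := ℂ) (φ := fun _ : Fin 2 => ℂ) j) x :=
    fun j => (ContinuousLinearMap.proj (R := ℂ) (φ := fun _ : Fin 2 => ℂ) j).hasFDerivAt
  have h1 : HasFDerivAt (fun y : Fin 2 → ℂ => a * y 0)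
      (a • ContinuousLinearMap.proj (0 : Fin 2)) x := (hp 0).const_mul a
  have h2 : HasFDerivAt (fun y : Fin 2 → ℂ => b * y 1)
      (b • ContinuousLinearMap.proj (1 : Fin 2)) x := (hp 1).const_mul b
  have hmono : ∀ j k m : Fin 2, HasFDerivAt (𝕜 := ℂ)
      (fun y : Fin 2 → ℂ => w j k m * y j * y k * y m)
      ((w j k m * x j * x k) • ContinuousLinearMap.proj m +
        x m • ((w j k m * x j) • ContinuousLinearMap.proj k +
          x k • (w j k m • ContinuousLinearMap.proj j))) x := by
    intro j k m
    exact (((hp j).const_mul (w j k m)).mul (hp k)).mul (hp m)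
  exact (h1.add h2).add
    (HasFDerivAt.fun_sum fun j _ => HasFDerivAt.fun_sum fun k _ => HasFDerivAt.fun_sum fun m _ =>
      hmono j k m)

lemma ssmD_apply (a b : ℂ) (w : Fin 2 → Fin 2 → Fin 2 → ℂ) (x v : Fin 2 → ℂ) :
    ssmD a b w x v = a * v 0 + b * v 1 + ∑ j : Fin 2, ∑ k : Fin 2, ∑ m : Fin 2,
      w j k m * (v j * x k * x m + x j * v k * x m + x j * x k * v m) := by
  simp only [ssmD, ContinuousLinearMap.add_apply, ContinuousLinearMap.sum_apply,
    ContinuousLinearMap.smul_apply, ContinuousLinearMap.proj_apply, smul_eq_mul]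
  congr 1
  refine Finset.sum_congr rfl fun j _ => Finset.sum_congr rfl fun k _ =>
    Finset.sum_congr rfl fun m _ => by ring

/-- Cubic-order invariance of the single-mode SSM parametrization (Szalai et al.):
for the diagonalized system `ż = Λz + T(z)` with strictly cubic `T`, master modal
pair `(λ_ℓ, λ_{ℓ+1})` and the stated non-resonance conditions, the parametrization
`W` with cubic coefficients `W⁽³⁾` and reduced dynamics `R` (cubic coefficients
`β, γ`) satisfies the invariance equation `DW(s)·R(s) = ΛW(s) + T(W(s))` up to
terms of order `O(|s|⁵)`; i.e. the defect, evaluated along rays `t • s`, is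
`O(t⁵)` as `t → 0`. -/
theorem ssm_cubic_invariance
    (N : ℕ) (hN : 2 ≤ N) (lam : Fin N → ℂ) (l : ℕ) (hl : l + 1 < N)
    (L L' : Fin N) (hL : L = ⟨l, by omega⟩) (hL' : L' = ⟨l + 1, hl⟩)
    (T : Fin N → Fin N → Fin N → Fin N → ℂ)
    (hres1 : ∀ i, 3 * lam L ≠ lam i)
    (hres2 : ∀ i, 3 * lam L' ≠ lam i)
    (hres3 : ∀ i, i ≠ L → 2 * lam L + lam L' ≠ lam i)
    (hres4 : ∀ i, i ≠ L' → lam L + 2 * lam L' ≠ lam i)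
    (Tmap : (Fin N → ℂ) → (Fin N → ℂ))
    (hT : ∀ z i, Tmap z i = ∑ j : Fin N, ∑ k : Fin N, ∑ m : Fin N,
      T i j k m * z j * z k * z m)
    (idx : Fin 2 → Fin N) (hidx0 : idx 0 = L) (hidx1 : idx 1 = L')
    (W3 : Fin N → Fin 2 → Fin 2 → Fin 2 → ℂ)
    (hW3 : ∀ i j k m, W3 i j k m =
      if (j : ℕ) + (k : ℕ) + (m : ℕ) = 0 then
        T i L L L / (3 * lam L - lam i)
      else if (j : ℕ) + (k : ℕ) + (m : ℕ) = 3 then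
        T i L' L' L' / (3 * lam L' - lam i)
      else if (j : ℕ) + (k : ℕ) + (m : ℕ) = 1 then
        (if i = L then 0 else
          T i (idx j) (idx k) (idx m) / (2 * lam L + lam L' - lam i))
      else
        (if i = L' then 0 else
          T i (idx j) (idx k) (idx m) / (lam L + 2 * lam L' - lam i)))
    (W : (Fin 2 → ℂ) → (Fin N → ℂ))
    (hW : ∀ s i, W s i =
      (if i = L then s 0 else 0) + (if i = L' then s 1 else 0)
        + ∑ j : Fin 2, ∑ k : Fin 2, ∑ m : Fin 2, W3 i j k m * s j * s k * s m)
    (β γ : ℂ)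
    (hβ : β = T L L L L' + T L L L' L + T L L' L L)
    (hγ : γ = T L' L' L' L + T L' L' L L' + T L' L L' L')
    (R : (Fin 2 → ℂ) → (Fin 2 → ℂ))
    (hR : ∀ s, R s = ![lam L * s 0 + β * s 0 ^ 2 * s 1,
                       lam L' * s 1 + γ * s 0 * s 1 ^ 2]) :
    ∀ s : Fin 2 → ℂ,
      (fun t : ℂ => fun i : Fin N =>
          fderiv ℂ W (t • s) (R (t • s)) i - lam i * W (t • s) i
            - Tmap (W (t • s)) i)
        =O[nhds (0 : ℂ)] (fun t : ℂ => t ^ 5) := by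
  intro s
  rw [Asymptotics.isBigO_pi]
  intro i
  have hLL' : L ≠ L' := by
    rw [hL, hL']; intro h; rw [Fin.mk.injEq] at h; omega
  -- the explicit form of W
  have Weq : W = fun (y : Fin 2 → ℂ) (i' : Fin N) =>
      (if i' = L then (1 : ℂ) else 0) * y 0 + (if i' = L' then (1 : ℂ) else 0) * y 1 +
      ∑ j : Fin 2, ∑ k : Fin 2, ∑ m : Fin 2, W3 i' j k m * y j * y k * y m := by
    funext y i'
    rw [hW]
    by_cases h1 : i' = L <;> by_cases h2 : i' = L' <;> simp [h1, h2]
  -- evaluation of the derivative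
  have hDW : ∀ x v : Fin 2 → ℂ, fderiv ℂ W x v i =
      (if i = L then (1 : ℂ) else 0) * v 0 + (if i = L' then (1 : ℂ) else 0) * v 1 +
      ∑ j : Fin 2, ∑ k : Fin 2, ∑ m : Fin 2,
        W3 i j k m * (v j * x k * x m + x j * v k * x m + x j * x k * v m) := by
    intro x v
    have hfd : fderiv ℂ W x = ContinuousLinearMap.pi
        (fun i' : Fin N => ssmD (if i' = L then (1 : ℂ) else 0)
          (if i' = L' then (1 : ℂ) else 0) (W3 i') x) := by
      rw [Weq]
      exact (hasFDerivAt_pi.2 fun i' => ssmD_hasFDerivAt _ _ _ x).fderiv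
    rw [hfd, ContinuousLinearMap.pi_apply, ssmD_apply]
  -- abbreviations
  set u : Fin N → ℂ := fun j => (if j = L then s 0 else 0) + (if j = L' then s 1 else 0)
    with hu
  set c : Fin N → ℂ := fun j =>
    ∑ p : Fin 2, ∑ q : Fin 2, ∑ r : Fin 2, W3 j p q r * s p * s q * s r with hc
  set v1 : Fin 2 → ℂ := ![lam L * s 0, lam L' * s 1] with hv1
  set v3 : Fin 2 → ℂ := ![β * s 0 ^ 2 * s 1, γ * s 0 * s 1 ^ 2] with hv3
  have hWx : ∀ (t : ℂ) (j : Fin N), W (t • s) j = t * u j + t ^ 3 * c j := by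
    intro t j
    rw [hW]
    have h3 : (∑ p : Fin 2, ∑ q : Fin 2, ∑ r : Fin 2,
        W3 j p q r * (t • s) p * (t • s) q * (t • s) r)
        = t ^ 3 * ∑ p : Fin 2, ∑ q : Fin 2, ∑ r : Fin 2, W3 j p q r * s p * s q * s r := by
      simp only [Finset.mul_sum]
      refine Finset.sum_congr rfl fun p _ => Finset.sum_congr rfl fun q _ =>
        Finset.sum_congr rfl fun r _ => ?_
      simp only [Pi.smul_apply, smul_eq_mul]; ring
    rw [h3]
    simp only [hu, hc, Pi.smul_apply, smul_eq_mul]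
    by_cases h1 : j = L <;> by_cases h2 : j = L' <;> simp [h1, h2, hLL', hLL'.symm] <;> ring
  have hV : ∀ (t : ℂ) (p : Fin 2), R (t • s) p = t * v1 p + t ^ 3 * v3 p := by
    intro t p
    rw [hR, hv1, hv3]
    fin_cases p <;> simp [Pi.smul_apply, smul_eq_mul] <;> ring
  set S3 := ∑ j : Fin N, ∑ k : Fin N, ∑ m : Fin N, T i j k m * (u j * u k * u m) with hS3
  set S5 := ∑ j : Fin N, ∑ k : Fin N, ∑ m : Fin N,
    T i j k m * (u j * u k * c m + u j * c k * u m + c j * u k * u m) with hS5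
  set S7 := ∑ j : Fin N, ∑ k : Fin N, ∑ m : Fin N,
    T i j k m * (u j * c k * c m + c j * u k * c m + c j * c k * u m) with hS7
  set S9 := ∑ j : Fin N, ∑ k : Fin N, ∑ m : Fin N, T i j k m * (c j * c k * c m) with hS9
  set Q := ∑ j : Fin 2, ∑ k : Fin 2, ∑ m : Fin 2,
    W3 i j k m * (v3 j * s k * s m + s j * v3 k * s m + s j * s k * v3 m) with hQ
  have hTpart : ∀ t : ℂ, Tmap (W (t • s)) i
      = t ^ 3 * S3 + t ^ 5 * S5 + t ^ 7 * S7 + t ^ 9 * S9 := by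
    intro t
    rw [hT]
    simp only [hWx]
    rw [hS3, hS5, hS7, hS9]
    simp only [Finset.mul_sum, ← Finset.sum_add_distrib]
    refine Finset.sum_congr rfl fun j _ => Finset.sum_congr rfl fun k _ =>
      Finset.sum_congr rfl fun m _ => ?_
    ring
  have hS3c : S3 = ∑ j : Fin 2, ∑ k : Fin 2, ∑ m : Fin 2,
      T i (idx j) (idx k) (idx m) * s j * s k * s m := by
    rw [hS3]
    simp only [hu, mul_add, add_mul, mul_ite, ite_mul, mul_zero, zero_mul,
      Finset.sum_add_distrib, Finset.sum_ite_eq', Finset.mem_univ, if_true]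
    simp only [Fin.sum_univ_two, hidx0, hidx1]
    ring
  -- the key coefficient identity at cubic order
  have cl : ∀ j k m : Fin 2, W3 i j k m *
        (lam (idx j) + lam (idx k) + lam (idx m) - lam i)
      = T i (idx j) (idx k) (idx m)
        - (if i = L ∧ ((j : ℕ) + (k : ℕ) + (m : ℕ) = 1) then
            T i (idx j) (idx k) (idx m) else 0)
        - (if i = L' ∧ ((j : ℕ) + (k : ℕ) + (m : ℕ) = 2) then
            T i (idx j) (idx k) (idx m) else 0) := by
    have hd1 : (3 : ℂ) * lam L - lam i ≠ 0 := sub_ne_zero_of_ne (hres1 i)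
    have hd2 : (3 : ℂ) * lam L' - lam i ≠ 0 := sub_ne_zero_of_ne (hres2 i)
    intro j k m
    fin_cases j <;> fin_cases k <;> fin_cases m <;>
      simp only [hW3, Fin.mk_zero, Fin.mk_one, hidx0, hidx1, Fin.isValue, Fin.val_zero, Fin.val_one] <;>
      norm_num
    · field_simp
      ring_nf
    · by_cases hiL : i = L
      · simp [hiL]
      · have hd : 2 * lam L + lam L' - lam i ≠ 0 := sub_ne_zero_of_ne (hres3 i hiL)
        simp only [hiL, if_false]
        field_simp
        ring_nf
    · by_cases hiL : i = L
      · simp [hiL]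
      · have hd : 2 * lam L + lam L' - lam i ≠ 0 := sub_ne_zero_of_ne (hres3 i hiL)
        simp only [hiL, if_false]
        field_simp
        ring_nf
    · by_cases hiL : i = L'
      · simp [hiL]
      · have hd : lam L + 2 * lam L' - lam i ≠ 0 := sub_ne_zero_of_ne (hres4 i hiL)
        simp only [hiL, if_false]
        field_simp
        ring_nf
    · by_cases hiL : i = L
      · simp [hiL]
      · have hd : 2 * lam L + lam L' - lam i ≠ 0 := sub_ne_zero_of_ne (hres3 i hiL)
        simp only [hiL, if_false]
        field_simp
        ring_nf
    · by_cases hiL : i = L'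
      · simp [hiL]
      · have hd : lam L + 2 * lam L' - lam i ≠ 0 := sub_ne_zero_of_ne (hres4 i hiL)
        simp only [hiL, if_false]
        field_simp
        ring_nf
    · by_cases hiL : i = L'
      · simp [hiL]
      · have hd : lam L + 2 * lam L' - lam i ≠ 0 := sub_ne_zero_of_ne (hres4 i hiL)
        simp only [hiL, if_false]
        field_simp
        ring_nf
    · field_simp
      ring_nf
  have hE1 : (if i = L then (1 : ℂ) else 0) * v1 0 + (if i = L' then (1 : ℂ) else 0) * v1 1
      - lam i * u i = 0 := by
    by_cases h1 : i = L
    · have h2 : i ≠ L' := fun h => hLL' (h1.symm.trans h)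
      simp [hv1, hu, h1, h2, hLL']
    · by_cases h2 : i = L'
      · simp [hv1, hu, h1, h2, (Ne.symm hLL')]
      · simp [hv1, hu, h1, h2]
  have hE3 : (if i = L then (1 : ℂ) else 0) * v3 0 + (if i = L' then (1 : ℂ) else 0) * v3 1
      + (∑ j : Fin 2, ∑ k : Fin 2, ∑ m : Fin 2,
          W3 i j k m * (v1 j * s k * s m + s j * v1 k * s m + s j * s k * v1 m))
      - lam i * c i
      - (∑ j : Fin 2, ∑ k : Fin 2, ∑ m : Fin 2,
          T i (idx j) (idx k) (idx m) * s j * s k * s m) = 0 := by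
    have c000 := cl 0 0 0
    have c001 := cl 0 0 1
    have c010 := cl 0 1 0
    have c011 := cl 0 1 1
    have c100 := cl 1 0 0
    have c101 := cl 1 0 1
    have c110 := cl 1 1 0
    have c111 := cl 1 1 1
    by_cases h1 : i = L
    · have h2 : i ≠ L' := fun h => hLL' (h1.symm.trans h)
      norm_num [-mul_eq_zero, h1, hLL', hidx0, hidx1, Fin.val_zero, Fin.val_one]
        at c000 c001 c010 c011 c100 c101 c110 c111
      simp only [h1, hLL', hidx0, hidx1, hv1, hv3, hc, hβ, hγ, Fin.sum_univ_two,
        Matrix.cons_val_zero, Matrix.cons_val_one, Matrix.head_cons,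
        if_true, if_false, eq_self_iff_true, if_neg hLL']
      linear_combination (s 0 * s 0 * s 0) * c000 + (s 0 * s 0 * s 1) * c001
        + (s 0 * s 1 * s 0) * c010 + (s 0 * s 1 * s 1) * c011
        + (s 1 * s 0 * s 0) * c100 + (s 1 * s 0 * s 1) * c101
        + (s 1 * s 1 * s 0) * c110 + (s 1 * s 1 * s 1) * c111
    · by_cases h2 : i = L'
      · norm_num [-mul_eq_zero, h2, h1, (Ne.symm hLL'), hidx0, hidx1, Fin.val_zero, Fin.val_one]
          at c000 c001 c010 c011 c100 c101 c110 c111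
        simp only [h2, hidx0, hidx1, hv1, hv3, hc, hβ, hγ, Fin.sum_univ_two,
          Matrix.cons_val_zero, Matrix.cons_val_one, Matrix.head_cons,
          if_true, if_false, eq_self_iff_true, if_neg (Ne.symm hLL'), if_neg h1]
        linear_combination (s 0 * s 0 * s 0) * c000 + (s 0 * s 0 * s 1) * c001
          + (s 0 * s 1 * s 0) * c010 + (s 0 * s 1 * s 1) * c011
          + (s 1 * s 0 * s 0) * c100 + (s 1 * s 0 * s 1) * c101
          + (s 1 * s 1 * s 0) * c110 + (s 1 * s 1 * s 1) * c111
      · norm_num [-mul_eq_zero, h1, h2, hidx0, hidx1, Fin.val_zero, Fin.val_one]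
          at c000 c001 c010 c011 c100 c101 c110 c111
        simp only [hidx0, hidx1, hv1, hv3, hc, Fin.sum_univ_two,
          Matrix.cons_val_zero, Matrix.cons_val_one, Matrix.head_cons,
          if_neg h1, if_neg h2]
        linear_combination (s 0 * s 0 * s 0) * c000 + (s 0 * s 0 * s 1) * c001
          + (s 0 * s 1 * s 0) * c010 + (s 0 * s 1 * s 1) * c011
          + (s 1 * s 0 * s 0) * c100 + (s 1 * s 0 * s 1) * c101
          + (s 1 * s 1 * s 0) * c110 + (s 1 * s 1 * s 1) * c111
  have key : ∀ t : ℂ,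
      fderiv ℂ W (t • s) (R (t • s)) i - lam i * W (t • s) i - Tmap (W (t • s)) i
        = t ^ 5 * (Q - S5 - t ^ 2 * S7 - t ^ 4 * S9) := by
    intro t
    rw [hDW, hWx, hTpart, hS3c]
    have hE1' := hE1
    have hE3' := hE3
    simp only [Fin.sum_univ_two, hv1, hv3, Matrix.cons_val_zero, Matrix.cons_val_one,
      Matrix.head_cons] at hE1' hE3'
    simp only [hV, Pi.smul_apply, smul_eq_mul, hQ, Fin.sum_univ_two, hv1, hv3,
      Matrix.cons_val_zero, Matrix.cons_val_one, Matrix.head_cons]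
    linear_combination t * hE1' + t ^ 3 * hE3'
  have hGcont : Continuous (fun t : ℂ => Q - S5 - t ^ 2 * S7 - t ^ 4 * S9) := by
    fun_prop
  have hGO : (fun t : ℂ => Q - S5 - t ^ 2 * S7 - t ^ 4 * S9) =O[nhds (0 : ℂ)]
      (fun _ : ℂ => (1 : ℂ)) :=
    (hGcont.tendsto 0).isBigO_one ℂ
  have final : (fun t : ℂ => t ^ 5 * (Q - S5 - t ^ 2 * S7 - t ^ 4 * S9)) =O[nhds (0 : ℂ)]
      (fun t : ℂ => t ^ 5) := by
    have h := (Asymptotics.isBigO_refl (fun t : ℂ => t ^ 5) (nhds (0 : ℂ))).mul hGO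
    simpa only [mul_one] using h
  exact final.congr' (Filter.Eventually.of_forall fun t => (key t).symm)
    (Filter.EventuallyEq.refl _ _)
end
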